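/- Suppose X and Y are proper geodesic hyperbolic spaces whose sequential boundaries are equipped with visual metrics. If f : X → Y is radial, then the induced map tilde f : ∂X → ∂Y (sending [(x_n)] to [(f(x_n))]) is well defined and Hölder with respect to the visual metrics. -/

import Mathlib

open Filter Metric Set

noncomputable section

namespace Gromov

variable {X : Type*} [MetricSpace X] {Y : Type*} [MetricSpace Y]

/-- The Gromov product `(x,y)_a = (d(x,a)+d(y,a)-d(x,y))/2`. -/
def gp (a x y : X) : ℝ := (dist x a + dist y a - dist x y) / 2

/-- Gromov `δ`-hyperbolicity via the `δ/4`-inequality. -/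
def IsDeltaHyperbolic (X : Type*) [MetricSpace X] (δ : ℝ) : Prop :=
  ∀ x y z w : X, gp w x y ≥ min (gp w x z) (gp w z y) - δ / 4

/-- `γ` is a geodesic starting at `x`, parametrized by arclength on `[0, M]`. -/
def IsGeodesicOn (γ : ℝ → X) (x : X) (M : ℝ) : Prop :=
  γ 0 = x ∧ ∀ s ∈ Icc (0:ℝ) M, ∀ t ∈ Icc (0:ℝ) M, dist (γ s) (γ t) = |s - t|

/-- Every two points are joined by a geodesic. -/
def IsGeodesicSpace (X : Type*) [MetricSpace X] : Prop :=
  ∀ x y : X, ∃ γ : ℝ → X, IsGeodesicOn γ x (dist x y) ∧ γ (dist x y) = y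

/-- An infinite geodesic ray emanating from `x`. -/
def IsRay (γ : ℝ → X) (x : X) : Prop :=
  γ 0 = x ∧ ∀ s ∈ Ici (0:ℝ), ∀ t ∈ Ici (0:ℝ), dist (γ s) (γ t) = |s - t|

/-- `f` is `(l, μ)`-large scale Lipschitz. -/
def IsLSL (f : X → Y) (l μ : ℝ) : Prop :=
  ∀ x y : X, dist (f x) (f y) ≤ l * dist x y + μ

/-- `f` is large scale Lipschitz. -/
def LSL (f : X → Y) : Prop := ∃ l μ : ℝ, 0 < l ∧ 0 < μ ∧ IsLSL f l μ

/-- The `(l2, μ2)`-radial lower bound condition with respect to `x₀`: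
on every finite geodesic emanating from `x₀`, `l2·d(x,y) - μ2 ≤ d(f(x),f(y))`. -/
def IsRadialWith (f : X → Y) (x₀ : X) (l2 μ2 : ℝ) : Prop :=
  ∀ M, 0 ≤ M → ∀ γ : ℝ → X, IsGeodesicOn γ x₀ M →
    ∀ s ∈ Icc (0:ℝ) M, ∀ t ∈ Icc (0:ℝ) M,
      l2 * dist (γ s) (γ t) - μ2 ≤ dist (f (γ s)) (f (γ t))

/-- `f` is a radial function with respect to `x₀`. -/
def Radial (f : X → Y) (x₀ : X) : Prop :=
  LSL f ∧ ∃ l2 μ2 : ℝ, 0 < l2 ∧ 0 < μ2 ∧ IsRadialWith f x₀ l2 μ2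

/-- `f` is visual: for some basepoint `a`, `(x_n,y_n)_a → ∞` implies
`(f(x_n),f(y_n))_{f(a)} → ∞`. -/
def VisualFn (f : X → Y) : Prop :=
  ∃ a : X, ∀ x y : ℕ → X,
    Tendsto (fun n => gp a (x n) (y n)) atTop atTop →
    Tendsto (fun n => gp (f a) (f (x n)) (f (y n))) atTop atTop

/-- `liminf_{i,j→∞} (x_i,x_j)_a = ∞`: the sequence converges to infinity. -/
def ConvSeq (a : X) (x : ℕ → X) : Prop :=
  Tendsto (fun p : ℕ × ℕ => gp a (x p.1) (x p.2)) atTop atTop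

/-- `liminf_{i,j→∞} (x_i,y_j)_a = ∞`: the two sequences are equivalent. -/
def SeqEquiv (a : X) (x y : ℕ → X) : Prop :=
  Tendsto (fun p : ℕ × ℕ => gp a (x p.1) (y p.2)) atTop atTop

def BSeq (a : X) : Type _ := {x : ℕ → X // ConvSeq a x}

/-- The sequential boundary `∂X` with basepoint `a`. -/
def Boundary (a : X) : Type _ := Quot (fun x y : BSeq a => SeqEquiv a x.1 y.1)

/-- The boundary point represented by a sequence. -/
def bpt (a : X) (x : ℕ → X) (hx : ConvSeq a x) : Boundary a :=
  Quot.mk _ ⟨x, hx⟩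

/-- `liminf_{i,j→∞} (x_i,y_j)_a` as an extended real. -/
def gpSeqs (a : X) (x y : ℕ → X) : EReal :=
  liminf (fun p : ℕ × ℕ => ((gp a (x p.1) (y p.2)) : EReal)) atTop

/-- The basic neighborhood `U(p,r)` in the sequential boundary. -/
def U (a : X) (p : Boundary a) (r : ℝ) : Set (Boundary a) :=
  {q | ∃ (x y : ℕ → X) (hx : ConvSeq a x) (hy : ConvSeq a y),
    bpt a x hx = p ∧ bpt a y hy = q ∧ (r : EReal) ≤ gpSeqs a x y}

instance (a : X) : TopologicalSpace (Boundary a) :=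
  TopologicalSpace.generateFrom {s | ∃ p r, 0 < r ∧ s = U a p r}

/-- The union `X ∪ ∂X`. -/
def Comp (a : X) : Type _ := X ⊕ Boundary a

def Comp.inl {a : X} (x : X) : Comp a := Sum.inl x
def Comp.inr {a : X} (p : Boundary a) : Comp a := Sum.inr p

/-- The extension of `U(p,r)` to `X ∪ ∂X`. -/
def UFull (a : X) (p : Boundary a) (r : ℝ) : Set (Comp a) :=
  {z : X ⊕ Boundary a | Sum.elim
    (fun x : X => ∃ (s : ℕ → X) (hs : ConvSeq a s), bpt a s hs = p ∧
      (r : EReal) ≤ liminf (fun i : ℕ => ((gp a (s i) x) : EReal)) atTop)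
    (fun q : Boundary a => q ∈ U a p r) z}

instance (a : X) : TopologicalSpace (Comp a) :=
  TopologicalSpace.generateFrom
    ({s | ∃ u : Set X, IsOpen u ∧ s = Comp.inl '' u} ∪
     {s | ∃ p r, 0 < r ∧ s = UFull a p r})

/-- The Gromov product of two boundary points:
`(p,q)_a = inf liminf_{i→∞} (x_i,y_i)_a` over representatives. -/
def gpBoundary (a : X) (p q : Boundary a) : EReal :=
  sInf {e : EReal | ∃ (x y : ℕ → X) (hx : ConvSeq a x) (hy : ConvSeq a y),
    bpt a x hx = p ∧ bpt a y hy = q ∧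
    e = liminf (fun i : ℕ => ((gp a (x i) (y i)) : EReal)) atTop}

/-- `K^{-e}` for an extended real exponent `e` (with `K^{-∞} = 0`). -/
def negPow (K : ℝ) (e : EReal) : ℝ :=
  if e = ⊤ then 0 else if e = ⊥ then 0 else Real.rpow K (-(e.toReal))

/-- `d` is a visual metric on `∂X` with parameters `K, C > 1`. -/
def IsVisualMetric (a : X) (d : Boundary a → Boundary a → ℝ) (K C : ℝ) : Prop :=
  1 < K ∧ 1 < C ∧ ∀ p q : Boundary a,
    negPow K (gpBoundary a p q) / C ≤ d p q ∧ d p q ≤ C * negPow K (gpBoundary a p q)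

/-- A map between sets with distinguished distance functions is Hölder. -/
def IsHolder {A B : Type*} (dA : A → A → ℝ) (dB : B → B → ℝ) (g : A → B) : Prop :=
  ∃ L α : ℝ, 0 < L ∧ 0 < α ∧ ∀ p q : A, dB (g p) (g q) ≤ L * Real.rpow (dA p q) α

/-- `(ξ₁,ξ₂)_a = liminf_{t→∞} (ξ₁(t),ξ₂(t))_a` for rays. -/
def gpRays (a : X) (ξ₁ ξ₂ : ℝ → X) : EReal :=
  liminf (fun t : ℝ => ((gp a (ξ₁ t) (ξ₂ t)) : EReal)) atTop

/-- The geodesic ray `ξ` represents the boundary point `p`. -/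
def RayRepresents (a : X) (ξ : ℝ → X) (p : Boundary a) : Prop :=
  ∃ h : ConvSeq a (fun n : ℕ => ξ n), bpt a (fun n : ℕ => ξ n) h = p

/-- `(x,ξ)_a = liminf_{n→∞} (x,ξ(n))_a`. -/
def gpPointRay (a x : X) (ξ : ℝ → X) : ℝ :=
  liminf (fun n : ℕ => gp a x (ξ n)) atTop

/-- `X` is a visual hyperbolic space with basepoint `a` and constant `D`. -/
def IsVisualSpace (a : X) (D : ℝ) : Prop :=
  ∀ x : X, ∃ ξ : ℝ → X, IsRay ξ a ∧ gpPointRay a x ξ > dist x a - D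

/-- A maximal finite geodesic from `a`: it admits no proper geodesic extension. -/
def MaximalGeodesic (ζ : ℝ → X) (a : X) (M : ℝ) : Prop :=
  IsGeodesicOn ζ a M ∧
    ¬ ∃ (M' : ℝ) (ζ' : ℝ → X), M < M' ∧ IsGeodesicOn ζ' a M' ∧
      ∀ t ∈ Icc (0:ℝ) M, ζ' t = ζ t

/-- `f : X → Y` is a radial extension with parameter `A` of `g : ∂X → ∂Y`
(`D` being the visuality constant of `X`). -/
def IsRadialExtension (a : X) (b : Y) (g : Boundary a → Boundary b)
    (A D : ℝ) (f : X → Y) : Prop :=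
  f a = b ∧
  ∀ x : X, x ≠ a →
    ((∃ (ξ : ℝ → X) (t : ℝ), IsRay ξ a ∧ 0 ≤ t ∧ ξ t = x) →
      ∃ (ξ : ℝ → X) (t : ℝ) (η : ℝ → Y), IsRay ξ a ∧ 0 ≤ t ∧ ξ t = x ∧ IsRay η b ∧
        (∃ p : Boundary a, RayRepresents a ξ p ∧ RayRepresents b η (g p)) ∧
        f x = η (A * t)) ∧
    ((¬ ∃ (ξ : ℝ → X) (t : ℝ), IsRay ξ a ∧ 0 ≤ t ∧ ξ t = x) →
      ∃ (M t : ℝ) (ζ ξ : ℝ → X) (η : ℝ → Y),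
        MaximalGeodesic ζ a M ∧ t ∈ Icc (0:ℝ) M ∧ ζ t = x ∧
        IsRay ξ a ∧ gpPointRay a (ζ M) ξ > dist (ζ M) a - D ∧ IsRay η b ∧
        (∃ p : Boundary a, RayRepresents a ξ p ∧ RayRepresents b η (g p)) ∧
        f x = η (A * t))

/-- `f` is coarsely surjective. -/
def CoarselySurjective (f : X → Y) : Prop :=
  ∃ S : ℝ, 0 < S ∧ ∀ y : Y, ∃ x : X, dist y (f x) ≤ S

/-- `f` is bornologous (coarse). -/
def Bornologous (f : X → Y) : Prop :=
  ∀ R : ℝ, 0 < R → ∃ S : ℝ, 0 < S ∧ ∀ x x' : X, dist x x' ≤ R → dist (f x) (f x') ≤ S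

/-- `f` is a coarse embedding. -/
def CoarseEmbedding (f : X → Y) : Prop :=
  Bornologous f ∧
    ∀ R : ℝ, 0 < R → ∃ S : ℝ, 0 < S ∧ ∀ x x' : X, dist (f x) (f x') ≤ R → dist x x' ≤ S

/-- `f` is coarsely `n`-to-1. -/
def CoarselyNto1 (f : X → Y) (n : ℕ) : Prop :=
  ∀ R : ℝ, 0 < R → ∃ S : ℝ, 0 < S ∧ ∀ A : Set Y, EMetric.diam A < ENNReal.ofReal R →
    ∃ B : Fin n → Set X, (f ⁻¹' A = ⋃ i, B i) ∧
      ∀ i, EMetric.diam (B i) < ENNReal.ofReal S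

/-- `g : ∂X → ∂Y` is the boundary map induced by `f`, i.e. `g [(x_n)] = [(f(x_n))]`. -/
def InducedBoundaryMap (a : X) (f : X → Y) (g : Boundary a → Boundary (f a)) : Prop :=
  ∀ (x : ℕ → X) (hx : ConvSeq a x) (hfx : ConvSeq (f a) (f ∘ x)),
    g (bpt a x hx) = bpt (f a) (f ∘ x) hfx

/-- `g` is (at most) `n`-to-1. -/
def NTo1 {A B : Type*} (g : A → B) (n : ℕ) : Prop :=
  ∀ b : B, ∃ s : Finset A, s.card ≤ n ∧ ∀ a : A, g a = b → a ∈ s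

/-- Covering dimension at most `n`: every open cover admits an open refinement
of multiplicity at most `n+1`. -/
def CovDimLE (Z : Type*) [TopologicalSpace Z] (n : ℕ) : Prop :=
  ∀ 𝒰 : Set (Set Z), (∀ u ∈ 𝒰, IsOpen u) → ⋃₀ 𝒰 = univ →
    ∃ 𝒱 : Set (Set Z), (∀ v ∈ 𝒱, IsOpen v) ∧ ⋃₀ 𝒱 = univ ∧
      (∀ v ∈ 𝒱, ∃ u ∈ 𝒰, v ⊆ u) ∧
      ∀ z : Z, {v ∈ 𝒱 | z ∈ v}.Finite ∧ {v ∈ 𝒱 | z ∈ v}.ncard ≤ n + 1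

/-- `c_{f,n}(r)`: the supremum of numbers `B` such that there exist `n+1` points
with mutual Gromov products `< r` whose images have mutual Gromov products `≥ B`. -/
def cfn (a : X) (b : Y) (f : X → Y) (n : ℕ) (r : ℝ) : EReal :=
  sSup {e : EReal | ∃ (B : ℝ) (x : Fin (n + 1) → X), e = (B : EReal) ∧
    (∀ i j, i ≠ j → gp a (x i) (x j) < r) ∧
    (∀ i j, i ≠ j → B ≤ gp b (f (x i)) (f (x j)))}

/-! A radial map expands Gromov products at least affinely: `λ (x,y)_a - C ≤ (f x, f y)_{f a}`.
Along a geodesic `γ` from `a`, the radial lower bound beats the Lipschitz upper bound on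
`(f (γ s), f (γ s'))_{f a}` as long as `s' ≤ (1 + λ₂/λ₁) s`; chaining along a geometric
progression loses `δ/4` per step, which the linear growth of the progression absorbs. For
`t = (x,y)_a`, the points at distance `t` from `a` on geodesics to `x` and to `y` are `δ`-close,
which transfers the estimate to `(f x, f y)_{f a}`. Passing to the boundary,
`(f̃ p, f̃ q) ≥ λ (p,q) - C'`, and for visual metrics this is Hölder continuity with exponent
`λ log_{K_X} K_Y`. -/

lemma gp_nonneg (a x y : X) : 0 ≤ gp a x y := by
  have := dist_triangle x a y
  rw [dist_comm a y] at this
  unfold gp; linarith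

lemma gp_comm (a x y : X) : gp a x y = gp a y x := by
  unfold gp; rw [dist_comm x y]; ring

lemma gp_le_dist_left (a x y : X) : gp a x y ≤ dist x a := by
  have := dist_triangle y x a
  rw [dist_comm y x] at this
  unfold gp; linarith

lemma gp_le_dist_right (a x y : X) : gp a x y ≤ dist y a :=
  gp_comm a x y ▸ gp_le_dist_left a y x

namespace IsDeltaHyperbolic

variable {δ : ℝ}

lemma mono {δ' : ℝ} (hX : IsDeltaHyperbolic X δ) (hδ : δ ≤ δ') : IsDeltaHyperbolic X δ' :=
  fun x y z w => by have := hX x y z w; linarith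

lemma le_gp {w x y z : X} {c : ℝ} (hX : IsDeltaHyperbolic X δ)
    (hxz : c ≤ gp w x z) (hzy : c ≤ gp w z y) : c - δ / 4 ≤ gp w x y := by
  have := hX x y z w
  have := le_min hxz hzy
  linarith

lemma le_gp₃ {w x y z₁ z₂ : X} {c : ℝ} (hX : IsDeltaHyperbolic X δ) (hδ : 0 ≤ δ)
    (h₁ : c ≤ gp w x z₁) (h₂ : c ≤ gp w z₁ z₂) (h₃ : c ≤ gp w z₂ y) :
    c - δ / 2 ≤ gp w x y := by
  have := hX.le_gp (x := x) (c := c - δ / 4) (by linarith) (hX.le_gp h₂ h₃)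
  linarith

lemma le_gp_of_chain (hY : IsDeltaHyperbolic Y δ) (hδ : 0 ≤ δ) {b : Y} {ε : ℝ}
    (hε : δ / 4 ≤ ε) {n : ℕ} (hn : 1 ≤ n) (w : ℕ → Y) (B : ℝ)
    (h : ∀ i < n, B + i * ε ≤ gp b (w i) (w (i + 1))) : B - ε ≤ gp b (w 0) (w n) := by
  induction n, hn using Nat.le_induction generalizing w B with
  | base =>
    have := h 0 one_pos
    simp only [CharP.cast_eq_zero, zero_mul, add_zero, zero_add] at this
    linarith
  | succ n hn ih =>
    have h₁ : B ≤ gp b (w 0) (w 1) := by simpa using h 0 (by omega)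
    have h₂ : B ≤ gp b (w 1) (w (n + 1)) := by
      have := ih (fun i => w (i + 1)) (B + ε) fun i hi => by
        have := h (i + 1) (by omega)
        push_cast at this
        linarith
      simpa using this
    have := hY.le_gp h₁ h₂
    linarith

end IsDeltaHyperbolic

namespace IsGeodesicOn

variable {γ : ℝ → X} {x : X} {M s t : ℝ}

lemma dist_of_le (hγ : IsGeodesicOn γ x M) (hs : s ∈ Icc 0 M) (ht : t ∈ Icc 0 M) (hst : s ≤ t) :
    dist (γ s) (γ t) = t - s := by
  rw [hγ.2 s hs t ht, abs_sub_comm, abs_of_nonneg (sub_nonneg.2 hst)]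

lemma dist_start (hγ : IsGeodesicOn γ x M) (hs : s ∈ Icc 0 M) : dist (γ s) x = s := by
  rw [← hγ.1, dist_comm, hγ.dist_of_le ⟨le_rfl, hs.1.trans hs.2⟩ hs hs.1, sub_zero]

lemma gp_end (hγ : IsGeodesicOn γ x M) (hs : s ∈ Icc 0 M) : gp x (γ s) (γ M) = s := by
  have hM : M ∈ Icc 0 M := ⟨hs.1.trans hs.2, le_rfl⟩
  unfold gp
  rw [hγ.dist_start hs, hγ.dist_start hM, hγ.dist_of_le hs hM hs.2]
  ring

end IsGeodesicOn

lemma IsDeltaHyperbolic.dist_le_of_geodesic {δ : ℝ} (hX : IsDeltaHyperbolic X δ) (hδ : 0 ≤ δ)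
    {a x y : X} {γx γy : ℝ → X} (hγx : IsGeodesicOn γx a (dist a x)) (hx : γx (dist a x) = x)
    (hγy : IsGeodesicOn γy a (dist a y)) (hy : γy (dist a y) = y) :
    dist (γx (gp a x y)) (γy (gp a x y)) ≤ δ := by
  set t := gp a x y
  have htx : t ∈ Icc 0 (dist a x) := ⟨gp_nonneg a x y, dist_comm a x ▸ gp_le_dist_left a x y⟩
  have hty : t ∈ Icc 0 (dist a y) := ⟨gp_nonneg a x y, dist_comm a y ▸ gp_le_dist_right a x y⟩
  have h₁ : t ≤ gp a (γx t) x := (hx ▸ hγx.gp_end htx).ge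
  have h₃ : t ≤ gp a y (γy t) := (gp_comm a _ _ ▸ hy ▸ hγy.gp_end hty).ge
  -- consecutive points of `γx t, x, y, γy t` have Gromov product `t`
  have := hX.le_gp₃ hδ h₁ le_rfl h₃
  unfold gp at this
  rw [hγx.dist_start htx, hγy.dist_start hty] at this
  linarith

lemma exists_geometric_chain {t M q : ℝ} (ht : 0 < t) (htM : t ≤ M) (hq : 1 < q) :
    ∃ (n : ℕ) (s : ℕ → ℝ), s 0 = t ∧ s (n + 1) = M ∧ (∀ i, s i ∈ Icc t M) ∧
      (∀ i, s i ≤ s (i + 1) ∧ s (i + 1) ≤ q * s i) ∧ ∀ i ≤ n, t * q ^ i ≤ s (i + 1) := by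
  obtain ⟨n, hn, hn'⟩ := exists_nat_pow_near ((one_le_div ht).2 htM) hq
  rw [le_div_iff₀ ht, mul_comm] at hn
  rw [div_lt_iff₀ ht, mul_comm] at hn'
  have hmono : Monotone fun i : ℕ => t * q ^ i := fun i j hij =>
    mul_le_mul_of_nonneg_left (pow_le_pow_right₀ hq.le hij) ht.le
  refine ⟨n, fun i => min (t * q ^ i) M, by simpa using htM, min_eq_right hn'.le,
    fun i => ⟨le_min (by simpa using hmono (Nat.zero_le i)) htM, min_le_right _ _⟩,
    fun i => ⟨min_le_min_right _ (hmono i.le_succ), ?_⟩,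
    fun i hi => le_min (hmono i.le_succ) ((hmono hi).trans hn)⟩
  rw [mul_min_of_nonneg _ _ (by linarith)]
  exact min_le_min (le_of_eq (by ring)) (le_mul_of_one_le_left (ht.le.trans htM) hq.le)

namespace IsRadialWith

variable {f : X → Y} {a : X} {l1 m1 l2 m2 : ℝ} {γ : ℝ → X} {M s s' : ℝ}

lemma le_dist_start (h2 : IsRadialWith f a l2 m2) (hγ : IsGeodesicOn γ a M) (hs : s ∈ Icc 0 M) :
    l2 * s - m2 ≤ dist (f (γ s)) (f a) := by
  have h0 : (0 : ℝ) ∈ Icc 0 M := ⟨le_rfl, hs.1.trans hs.2⟩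
  have := h2 M h0.2 γ hγ 0 h0 s hs
  rwa [hγ.dist_of_le h0 hs hs.1, sub_zero, hγ.1, dist_comm] at this

lemma le_gp_of_mul_sub_le (h1 : IsLSL f l1 m1) (h2 : IsRadialWith f a l2 m2)
    (hγ : IsGeodesicOn γ a M) (hs : s ∈ Icc 0 M) (hs' : s' ∈ Icc 0 M) (hss' : s ≤ s')
    (hstep : l1 * (s' - s) ≤ l2 * s) :
    l2 * s' / 2 - (m2 + m1 / 2) ≤ gp (f a) (f (γ s)) (f (γ s')) := by
  have := h1 (γ s) (γ s')
  rw [hγ.dist_of_le hs hs' hss'] at this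
  have := h2.le_dist_start hγ hs
  have := h2.le_dist_start hγ hs'
  unfold gp
  linarith

lemma exists_le_gp_geodesic {δ : ℝ} (hY : IsDeltaHyperbolic Y δ) (hδ : 0 ≤ δ)
    (h1 : IsLSL f l1 m1) (hl1 : 0 < l1) (hm1 : 0 ≤ m1)
    (h2 : IsRadialWith f a l2 m2) (hl2 : 0 < l2) (hm2 : 0 ≤ m2) :
    ∃ C, 0 ≤ C ∧ ∀ M (γ : ℝ → X), IsGeodesicOn γ a M → ∀ t ∈ Icc 0 M,
      l2 / 2 * t - C ≤ gp (f a) (f (γ t)) (f (γ M)) := by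
  set ρ := l2 / l1
  have hρ : 0 < ρ := div_pos hl2 hl1
  have hl1ρ : l1 * ρ = l2 := mul_div_cancel₀ _ hl1.ne'
  -- below `t₀` the claim holds since `gp ≥ 0`; above it the `δ/4` lost per step of the chain
  -- is smaller than the growth `λ₂ ρ t / 2` of the geometric progression
  set t₀ := δ / (l2 * ρ)
  refine ⟨l2 / 2 * t₀ + m2 + m1 / 2 + δ / 4, by positivity, fun M γ hγ t ht => ?_⟩
  rcases le_or_gt t t₀ with ht₀ | ht₀
  · have := mul_le_mul_of_nonneg_left ht₀ (half_pos hl2).le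
    linarith [gp_nonneg (f a) (f (γ t)) (f (γ M))]
  have htpos : 0 < t := lt_of_le_of_lt (by positivity) ht₀
  have hδt : δ / 4 ≤ l2 * t * ρ / 2 := by
    have := (div_lt_iff₀ (by positivity)).1 ht₀
    linarith
  obtain ⟨n, s, hs0, hsn, hsmem, hsstep, hsgrowth⟩ :=
    exists_geometric_chain htpos ht.2 (lt_add_of_pos_right 1 hρ)
  have hmem : ∀ i, s i ∈ Icc 0 M := fun i => ⟨htpos.le.trans (hsmem i).1, (hsmem i).2⟩
  have hchain := hY.le_gp_of_chain (b := f a) hδ le_rfl (Nat.succ_pos n) (fun i => f (γ (s i)))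
    (l2 / 2 * t - (m2 + m1 / 2)) fun i hi => by
      have hstep := h2.le_gp_of_mul_sub_le h1 hγ (hmem i) (hmem (i + 1)) (hsstep i).1 (by
        have := mul_le_mul_of_nonneg_left (hsstep i).2 hl1.le
        have : l1 * ((1 + ρ) * s i) = l1 * s i + l2 * s i := by rw [← hl1ρ]; ring
        linarith)
      have hbern : t * (1 + i * ρ) ≤ s (i + 1) :=
        (mul_le_mul_of_nonneg_left (one_add_mul_le_pow (by linarith) i) htpos.le).trans
          (hsgrowth i (Nat.lt_succ_iff.1 hi))
      have := mul_le_mul_of_nonneg_left hδt (Nat.cast_nonneg (α := ℝ) i)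
      have := mul_le_mul_of_nonneg_left hbern hl2.le
      linarith
  simp only [hs0, hsn] at hchain
  have : 0 ≤ l2 / 2 * t₀ := by positivity
  linarith

end IsRadialWith

lemma Radial.exists_mul_sub_le_gp {δ : ℝ} (hδ : 0 ≤ δ) (hX : IsDeltaHyperbolic X δ)
    (hY : IsDeltaHyperbolic Y δ) (hgX : IsGeodesicSpace X) {f : X → Y} {a : X}
    (hrad : Radial f a) :
    ∃ lam C : ℝ, 0 < lam ∧ ∀ x y, lam * gp a x y - C ≤ gp (f a) (f x) (f y) := by
  obtain ⟨⟨l1, m1, hl1, hm1, h1⟩, l2, m2, hl2, hm2, h2⟩ := hrad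
  obtain ⟨C₀, hC₀, hC⟩ := h2.exists_le_gp_geodesic hY hδ h1 hl1 hm1.le hl2 hm2.le
  refine ⟨l2 / 2, C₀ + m2 + (l1 * δ + m1) / 2 + δ / 2, half_pos hl2, fun x y => ?_⟩
  set t := gp a x y
  obtain ⟨γx, hγx, hx⟩ := hgX a x
  obtain ⟨γy, hγy, hy⟩ := hgX a y
  have htx : t ∈ Icc 0 (dist a x) := ⟨gp_nonneg a x y, dist_comm a x ▸ gp_le_dist_left a x y⟩
  have hty : t ∈ Icc 0 (dist a y) := ⟨gp_nonneg a x y, dist_comm a y ▸ gp_le_dist_right a x y⟩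
  have hfx : l2 / 2 * t - C₀ ≤ gp (f a) (f x) (f (γx t)) :=
    gp_comm (f a) _ _ ▸ hx ▸ hC _ γx hγx t htx
  have hfy : l2 / 2 * t - C₀ ≤ gp (f a) (f (γy t)) (f y) := hy ▸ hC _ γy hγy t hty
  have hfxy : l2 * t - m2 - (l1 * δ + m1) / 2 ≤ gp (f a) (f (γx t)) (f (γy t)) := by
    have := h1 (γx t) (γy t)
    have := mul_le_mul_of_nonneg_left (hX.dist_le_of_geodesic hδ hγx hx hγy hy) hl1.le
    have := h2.le_dist_start hγx htx
    have := h2.le_dist_start hγy hty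
    unfold gp
    linarith
  have : 0 ≤ l1 * δ := mul_nonneg hl1.le hδ
  have : 0 ≤ l2 * t := mul_nonneg hl2.le htx.1
  have := hY.le_gp₃ hδ (c := l2 / 2 * t - (C₀ + m2 + (l1 * δ + m1) / 2))
    (hfx.trans' (by linarith)) (hfxy.trans' (by linarith)) (hfy.trans' (by linarith))
  linarith

lemma SeqEquiv.eventually_le {a : X} {x y : ℕ → X} (h : SeqEquiv a x y) (c : ℝ) :
    ∀ᶠ i in atTop, ∀ᶠ j in atTop, c ≤ gp a (x i) (y j) := by
  rw [SeqEquiv, ← prod_atTop_atTop_eq] at h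
  exact (h.eventually_ge_atTop c).curry

lemma SeqEquiv.symm {a : X} {x y : ℕ → X} (h : SeqEquiv a x y) : SeqEquiv a y x := by
  rw [SeqEquiv, ← prod_atTop_atTop_eq] at h ⊢
  simpa only [Function.comp_def, Prod.fst_swap, Prod.snd_swap, gp_comm a (x _)] using
    h.comp tendsto_prod_swap

lemma SeqEquiv.trans {δ : ℝ} (hX : IsDeltaHyperbolic X δ) {a : X} {x y z : ℕ → X}
    (hxy : SeqEquiv a x y) (hyz : SeqEquiv a y z) : SeqEquiv a x z := by
  refine tendsto_atTop.2 fun c => ?_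
  rw [← prod_atTop_atTop_eq]
  filter_upwards [(hxy.eventually_le (c + δ / 4)).prod_mk (hyz.symm.eventually_le (c + δ / 4))]
    with ⟨i, k⟩ ⟨hi, hk⟩
  obtain ⟨j, hij, hkj⟩ := (hi.and hk).exists
  have := hX.le_gp hij (gp_comm a _ _ ▸ hkj)
  linarith

lemma bpt_eq_iff {δ : ℝ} (hX : IsDeltaHyperbolic X δ) {a : X} {x y : ℕ → X}
    (hx : ConvSeq a x) (hy : ConvSeq a y) :
    bpt a x hx = bpt a y hy ↔ SeqEquiv a x y :=
  Quot.eq.trans (Equivalence.eqvGen_iff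
    ⟨fun u => u.2, SeqEquiv.symm, SeqEquiv.trans hX⟩)

lemma SeqEquiv.map {a : X} {b : Y} {f : X → Y} {lam C : ℝ} (hlam : 0 < lam)
    (hf : ∀ x y, lam * gp a x y - C ≤ gp b (f x) (f y)) {x y : ℕ → X} (h : SeqEquiv a x y) :
    SeqEquiv b (f ∘ x) (f ∘ y) :=
  tendsto_atTop_mono (fun p => hf (x p.1) (y p.2))
    (tendsto_atTop_add_const_right _ (-C) (h.const_mul_atTop hlam))

/-- `ConvSeq a x` is `SeqEquiv a x x` by definition, so `hf` also maps representatives. -/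
def Boundary.map {a : X} {b : Y} (f : X → Y)
    (hf : ∀ x y, SeqEquiv a x y → SeqEquiv b (f ∘ x) (f ∘ y)) : Boundary a → Boundary b :=
  Quot.lift (fun x => bpt b (f ∘ x.1) (hf x.1 x.1 x.2)) fun x y hxy => Quot.sound (hf x.1 y.1 hxy)

lemma eventually_le_gp_of_seqEquiv {δ : ℝ} (hY : IsDeltaHyperbolic Y δ) (hδ : 0 ≤ δ) {b : Y}
    {x x' y y' : ℕ → Y} {c : ℝ} (hx : SeqEquiv b x' x) (hy : SeqEquiv b y' y)
    (h : ∀ᶠ i in atTop, c ≤ gp b (x i) (y i)) :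
    ∀ᶠ i in atTop, c - δ / 2 ≤ gp b (x' i) (y' i) := by
  filter_upwards [hx.eventually_le c, hy.eventually_le c] with i hxi hyi
  obtain ⟨j, hj, hxj, hyj⟩ := (h.and (hxi.and hyi)).exists
  exact hY.le_gp₃ hδ hxj hj (gp_comm b _ _ ▸ hyj)

lemma le_gpBoundary_map {δ : ℝ} (hY : IsDeltaHyperbolic Y δ) (hδ : 0 ≤ δ) {a : X} {b : Y}
    {f : X → Y} {lam C : ℝ} (hlam : 0 ≤ lam) (hf : ∀ x y, lam * gp a x y - C ≤ gp b (f x) (f y))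
    (hmap : ∀ x y, SeqEquiv a x y → SeqEquiv b (f ∘ x) (f ∘ y)) (p q : Boundary a) (r : ℝ)
    (hr : (r : EReal) < gpBoundary a p q) :
    ((lam * r - (C + δ / 2) : ℝ) : EReal) ≤
      gpBoundary b (Boundary.map f hmap p) (Boundary.map f hmap q) := by
  induction p using Quot.ind with | mk x => ?_
  induction q using Quot.ind with | mk y => ?_
  have hfxy : ∀ᶠ i in atTop, lam * r - C ≤ gp b (f (x.1 i)) (f (y.1 i)) := by
    have := hr.trans_le (sInf_le ⟨x.1, y.1, x.2, y.2, rfl, rfl, rfl⟩)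
    filter_upwards [eventually_lt_of_lt_liminf this] with i hi
    have := mul_le_mul_of_nonneg_left (EReal.coe_lt_coe_iff.1 hi).le hlam
    linarith [hf (x.1 i) (y.1 i)]
  refine le_sInf ?_
  rintro _ ⟨x', y', hx', hy', hpx, hqy, rfl⟩
  have hx : SeqEquiv b x' (f ∘ x.1) := (bpt_eq_iff hY hx' (hmap _ _ x.2)).1 hpx
  have hy : SeqEquiv b y' (f ∘ y.1) := (bpt_eq_iff hY hy' (hmap _ _ y.2)).1 hqy
  refine le_liminf_of_le (by isBoundedDefault) ?_
  filter_upwards [eventually_le_gp_of_seqEquiv hY hδ hx hy hfxy] with i hi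
  exact EReal.coe_le_coe_iff.2 (by linarith)

lemma gpBoundary_nonneg (a : X) (p q : Boundary a) : 0 ≤ gpBoundary a p q := by
  refine le_sInf ?_
  rintro _ ⟨x, y, -, -, -, -, rfl⟩
  refine le_liminf_of_le (by isBoundedDefault) (Eventually.of_forall fun i => ?_)
  exact EReal.coe_nonneg.2 (gp_nonneg a (x i) (y i))

lemma negPow_top (K : ℝ) : negPow K ⊤ = 0 := if_pos rfl

lemma negPow_coe (K r : ℝ) : negPow K r = K ^ (-r) := by
  simp [negPow, Real.rpow_eq_pow]

lemma negPow_nonneg {K : ℝ} (hK : 0 ≤ K) (e : EReal) : 0 ≤ negPow K e := by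
  unfold negPow
  split_ifs
  exacts [le_rfl, le_rfl, Real.rpow_nonneg hK _]

lemma negPow_le_rpow {K : ℝ} (hK : 1 ≤ K) {e : EReal} {s : ℝ} (h : (s : EReal) ≤ e) :
    negPow K e ≤ K ^ (-s) := by
  induction e using EReal.rec with
  | bot => exact absurd h (by simp)
  | coe r =>
    rw [negPow_coe]
    exact Real.rpow_le_rpow_of_exponent_le hK (neg_le_neg (EReal.coe_le_coe_iff.1 h))
  | top => rw [negPow_top]; positivity

lemma negPow_le_mul_negPow_rpow {KX KY lam C : ℝ} (hKX : 1 < KX) (hKY : 1 < KY)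
    (hlam : 0 < lam) {e e' : EReal} (he : 0 ≤ e)
    (h : ∀ r : ℝ, (r : EReal) < e → ((lam * r - C : ℝ) : EReal) ≤ e') :
    negPow KY e' ≤ KY ^ (lam + C) * negPow KX e ^ (lam * Real.logb KX KY) := by
  have hKX0 : 0 < KX := zero_lt_one.trans hKX
  have hKY0 : 0 < KY := zero_lt_one.trans hKY
  induction e using EReal.rec with
  | bot => exact absurd he (by simp)
  | coe r =>
    calc negPow KY e' ≤ KY ^ (-(lam * (r - 1) - C)) :=
          negPow_le_rpow hKY.le (h (r - 1) (EReal.coe_lt_coe_iff.2 (sub_one_lt r)))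
      _ = KY ^ (lam + C) * (KX ^ Real.logb KX KY) ^ (-r * lam) := by
          rw [Real.rpow_logb hKX0 hKX.ne' hKY0, ← Real.rpow_add hKY0]
          ring_nf
      _ = KY ^ (lam + C) * negPow KX r ^ (lam * Real.logb KX KY) := by
          rw [negPow_coe, ← Real.rpow_mul hKX0.le, ← Real.rpow_mul hKX0.le]
          ring_nf
  | top =>
    have he' : e' = ⊤ := (EReal.eq_top_iff_forall_lt e').2 fun s =>
      (EReal.coe_lt_coe_iff.2 (by field_simp; linarith)).trans_le
        (h ((s + 1 + C) / lam) (EReal.coe_lt_top _))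
    rw [he', negPow_top, negPow_top,
      Real.zero_rpow (mul_pos hlam (Real.logb_pos hKX hKY)).ne', mul_zero]

lemma isHolder_of_le_gpBoundary {a : X} {b : Y} {dX : Boundary a → Boundary a → ℝ}
    {dY : Boundary b → Boundary b → ℝ} {KX CX KY CY lam C : ℝ}
    (hdX : IsVisualMetric a dX KX CX) (hdY : IsVisualMetric b dY KY CY)
    {g : Boundary a → Boundary b} (hlam : 0 < lam)
    (h : ∀ p q (r : ℝ), (r : EReal) < gpBoundary a p q →
      ((lam * r - C : ℝ) : EReal) ≤ gpBoundary b (g p) (g q)) :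
    IsHolder dX dY g := by
  obtain ⟨hKX, hCX, hdX⟩ := hdX
  obtain ⟨hKY, hCY, hdY⟩ := hdY
  have hCX0 : 0 < CX := zero_lt_one.trans hCX
  have hKY0 : 0 < KY := zero_lt_one.trans hKY
  set α := lam * Real.logb KX KY
  have hα : 0 < α := mul_pos hlam (Real.logb_pos hKX hKY)
  refine ⟨CY * KY ^ (lam + C) * CX ^ α, α, by positivity, hα, fun p q => ?_⟩
  have hnX := negPow_nonneg (zero_lt_one.trans hKX).le (gpBoundary a p q)
  calc dY (g p) (g q) ≤ CY * negPow KY (gpBoundary b (g p) (g q)) := (hdY _ _).2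
    _ ≤ CY * (KY ^ (lam + C) * negPow KX (gpBoundary a p q) ^ α) := by
        gcongr
        exact negPow_le_mul_negPow_rpow hKX hKY hlam (gpBoundary_nonneg a p q) (h p q)
    _ = CY * KY ^ (lam + C) * CX ^ α * (negPow KX (gpBoundary a p q) / CX) ^ α := by
        rw [Real.div_rpow hnX hCX0.le]
        field_simp
    _ ≤ CY * KY ^ (lam + C) * CX ^ α * dX p q ^ α := by
        gcongr
        exact (hdX p q).1

theorem stmt10_general {X : Type*} [MetricSpace X]
    {Y : Type*} [MetricSpace Y]
    (δ : ℝ) (hX : IsDeltaHyperbolic X δ) (hY : IsDeltaHyperbolic Y δ)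
    (hgX : IsGeodesicSpace X)
    (f : X → Y) (a : X) (hrad : Radial f a)
    (dX : Boundary a → Boundary a → ℝ) (KX CX : ℝ) (hdX : IsVisualMetric a dX KX CX)
    (dY : Boundary (f a) → Boundary (f a) → ℝ) (KY CY : ℝ)
    (hdY : IsVisualMetric (f a) dY KY CY) :
    (∀ x : ℕ → X, ConvSeq a x → ConvSeq (f a) (f ∘ x)) ∧
    (∀ x y : ℕ → X, ConvSeq a x → ConvSeq a y → SeqEquiv a x y →
      SeqEquiv (f a) (f ∘ x) (f ∘ y)) ∧
    (∃ g : Boundary a → Boundary (f a), InducedBoundaryMap a f g ∧ IsHolder dX dY g) := by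
  have hδ : 0 ≤ max δ 0 := le_max_right δ 0
  have hX' := hX.mono (le_max_left δ 0)
  have hY' := hY.mono (le_max_left δ 0)
  obtain ⟨lam, C, hlam, hf⟩ := Radial.exists_mul_sub_le_gp hδ hX' hY' hgX hrad
  have hmap : ∀ x y, SeqEquiv a x y → SeqEquiv (f a) (f ∘ x) (f ∘ y) :=
    fun _ _ => SeqEquiv.map hlam hf
  refine ⟨fun x => hmap x x, fun x y _ _ => hmap x y, Boundary.map f hmap,
    fun _ _ _ => rfl, ?_⟩
  exact isHolder_of_le_gpBoundary hdX hdY hlam (le_gpBoundary_map hY' hδ hlam.le hf hmap)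

/-- a radial function between proper geodesic hyperbolic spaces
induces a well-defined map of sequential boundaries which is Hölder with
respect to visual metrics. -/
theorem stmt10 {X : Type*} [MetricSpace X] [ProperSpace X]
    {Y : Type*} [MetricSpace Y] [ProperSpace Y]
    (δ : ℝ) (hX : IsDeltaHyperbolic X δ) (hY : IsDeltaHyperbolic Y δ)
    (hgX : IsGeodesicSpace X) (hgY : IsGeodesicSpace Y)
    (f : X → Y) (a : X) (hrad : Radial f a)
    (dX : Boundary a → Boundary a → ℝ) (KX CX : ℝ) (hdX : IsVisualMetric a dX KX CX)
    (dY : Boundary (f a) → Boundary (f a) → ℝ) (KY CY : ℝ)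
    (hdY : IsVisualMetric (f a) dY KY CY) :
    (∀ x : ℕ → X, ConvSeq a x → ConvSeq (f a) (f ∘ x)) ∧
    (∀ x y : ℕ → X, ConvSeq a x → ConvSeq a y → SeqEquiv a x y →
      SeqEquiv (f a) (f ∘ x) (f ∘ y)) ∧
    (∃ g : Boundary a → Boundary (f a), InducedBoundaryMap a f g ∧ IsHolder dX dY g) :=
  stmt10_general δ hX hY hgX f a hrad dX KX CX hdX dY KY CY hdY

end Gromov
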